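/- (Local abelianness) Fix an instruction field I. If α and β are both acceptable sequences of topplings for the pair (η,h), and m_α = m_β (each site is toppled the same number of times in α as in β), then Φ_α(η,h) = Φ_β(η,h). -/

import Mathlib

/-!
An instruction read at `x` acts on each site separately: away from `x` as the identity or as
`inc`, at `x` as `dec` or `mulS`, and both of these commute with `inc` on nonzero values. Hence
topplings of distinct sites commute as long as both are acceptable, and toppling `y` never empties
`x ≠ y`. Since `m_α = m_β` says that `β` is a permutation of `α`, the first toppling of `α`, at `x`,
can be moved to the front of `β` past the earlier topplings of `β` (none of which is at `x`), and
induction on `α` concludes.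
-/

open scoped ENNReal NNReal
open MeasureTheory

namespace ARW

/-- A site of the lattice `ℤ^d`. -/
abbrev Site (d : ℕ) := Fin d → ℤ

/-- The set `ℕ_𝔰 = ℕ ∪ {𝔰}` of possible values at a site. -/
inductive NS where
  | nat : ℕ → NS
  | s : NS
deriving DecidableEq

/-- Rank function realizing the total order `0 < 𝔰 < 1 < 2 < ⋯`
(`𝔰` is placed at `1/2`). -/
def NS.val : NS → ℚ
  | .nat n => n
  | .s => 1/2

instance : LE NS := ⟨fun a b => a.val ≤ b.val⟩
instance : LT NS := ⟨fun a b => a.val < b.val⟩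

/-- Remove one particle: `n − 1`, with `𝔰 − 1 = 0`. -/
def NS.dec : NS → NS
  | .nat 0 => .nat 0
  | .nat (n+1) => .nat n
  | .s => .nat 0

/-- Add one particle: `n + 1`, with `𝔰 + 1 = 2`. -/
def NS.inc : NS → NS
  | .nat n => .nat (n+1)
  | .s => .nat 2

/-- Multiplication by `𝔰`: `n·𝔰 = n` for `n ≥ 2`, `1·𝔰 = 𝔰`, `𝔰·𝔰 = 𝔰`. -/
def NS.mulS : NS → NS
  | .nat 0 => .nat 0
  | .nat 1 => .s
  | .nat (n+2) => .nat (n+2)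
  | .s => .s

/-- A configuration of the ARW. -/
abbrev Config (d : ℕ) := Site d → NS

/-- An odometer. -/
abbrev Odom (d : ℕ) := Site d → ℕ

/-- An instruction: either a sleep instruction `τ_{x𝔰}`, or a move instruction
`τ_{xy}` recorded through the displacement `z = y − x ≠ 0`. -/
inductive Instr (d : ℕ) where
  | sleep : Instr d
  | move : (z : Site d) → z ≠ 0 → Instr d

/-- Applying an instruction at site `x` to a configuration: `τ_{x𝔰}` replaces `η(x)` by
`η(x)·𝔰`; `τ_{xy}` (with `y = x + z`) decreases `η(x)` by one and increases `η(y)` by one. -/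
def applyInstr {d : ℕ} (x : Site d) (ι : Instr d) (η : Config d) : Config d :=
  match ι with
  | .sleep => Function.update η x (η x).mulS
  | .move z _ => fun w =>
      if w = x then (η x).dec
      else if w = x + z then (η (x + z)).inc
      else η w

/-- A field of instructions `(τ^{x,j})_{x ∈ ℤ^d, j ∈ ℕ}`. -/
abbrev InstrField (d : ℕ) := Site d → ℕ → Instr d

/-- Toppling site `x`: `Φ_x(η,h) = (τ^{x,h(x)+1} η, h + δ_x)`. -/
def topple {d : ℕ} (I : InstrField d) (x : Site d) (s : Config d × Odom d) :
    Config d × Odom d :=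
  (applyInstr x (I x (s.2 x + 1)) s.1, Function.update s.2 x (s.2 x + 1))

/-- `Φ_α` for a finite sequence `α = (x_1, …, x_k)` of sites (`x_1` acts first). -/
def toppleSeq {d : ℕ} (I : InstrField d) :
    List (Site d) → Config d × Odom d → Config d × Odom d
  | [], s => s
  | x :: α, s => toppleSeq I α (topple I x s)

/-- Site `x` is unstable for `η` if `η(x) ≥ 1`. -/
def Unstable {d : ℕ} (η : Config d) (x : Site d) : Prop := NS.nat 1 ≤ η x

/-- Toppling `x` is acceptable for `η` if `η(x) ≠ 0`. -/
def AcceptableAt {d : ℕ} (η : Config d) (x : Site d) : Prop := η x ≠ NS.nat 0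

/-- `α` is a legal sequence of topplings for `(η,h)`: each successive toppling is legal. -/
inductive LegalSeq {d : ℕ} (I : InstrField d) : List (Site d) → Config d × Odom d → Prop
  | nil (s : Config d × Odom d) : LegalSeq I [] s
  | cons {x : Site d} {α : List (Site d)} {s : Config d × Odom d} :
      Unstable s.1 x → LegalSeq I α (topple I x s) → LegalSeq I (x :: α) s

/-- `α` is an acceptable sequence of topplings for `(η,h)`. -/
inductive AcceptableSeq {d : ℕ} (I : InstrField d) : List (Site d) → Config d × Odom d → Prop
  | nil (s : Config d × Odom d) : AcceptableSeq I [] s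
  | cons {x : Site d} {α : List (Site d)} {s : Config d × Odom d} :
      AcceptableAt s.1 x → AcceptableSeq I α (topple I x s) → AcceptableSeq I (x :: α) s

/-- `η` is stable in `V`: every `x ∈ V` is stable for `η`. -/
def StableIn {d : ℕ} (η : Config d) (V : Set (Site d)) : Prop :=
  ∀ x ∈ V, ¬ Unstable η x

/-- `m_{V,η,h}(x) = sup { m_β(x) : β ⊆ V legal for (η,h) }`, as an element of `ℕ∞`. -/
noncomputable def mV {d : ℕ} (I : InstrField d) (V : Set (Site d)) (η : Config d) (h : Odom d)
    (x : Site d) : ℕ∞ :=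
  ⨆ (β : List (Site d)) (_ : (∀ y ∈ β, y ∈ V) ∧ LegalSeq I β (η, h)), (β.count x : ℕ∞)

/-- `m_{η,h} = m_{ℤ^d,η,h}`. -/
noncomputable def mFull {d : ℕ} (I : InstrField d) (η : Config d) (h : Odom d) :
    Site d → ℕ∞ :=
  mV I Set.univ η h

/-- The zero odometer. -/
def zeroOdom (d : ℕ) : Odom d := fun _ => 0

/-- `η` is `I`-stabilizable: `m_{η;I}(x) < ∞` for every `x`. -/
def Stabilizable {d : ℕ} (I : InstrField d) (η : Config d) : Prop :=
  ∀ x : Site d, mFull I η (zeroOdom d) x < ⊤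

/-- `η` is `I`-explosive: `m_{η;I}(x) = ∞` for every `x`. -/
def Explosive {d : ℕ} (I : InstrField d) (η : Config d) : Prop :=
  ∀ x : Site d, mFull I η (zeroOdom d) x = ⊤

lemma NS.inc_ne_zero (v : NS) : v.inc ≠ .nat 0 := by
  cases v <;> simp [NS.inc]

lemma NS.dec_inc {v : NS} (hv : v ≠ .nat 0) : v.inc.dec = v.dec.inc := by
  rcases v with ((_ | n) | _)
  · exact absurd rfl hv
  all_goals rfl

lemma NS.mulS_inc {v : NS} (hv : v ≠ .nat 0) : v.inc.mulS = v.mulS.inc := by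
  rcases v with ((_ | _ | n) | _)
  · exact absurd rfl hv
  all_goals rfl

def Instr.actAt {d : ℕ} (x : Site d) : Instr d → Site d → NS → NS
  | .sleep, w => if w = x then NS.mulS else id
  | .move z _, w => if w = x then NS.dec else if w = x + z then NS.inc else id

namespace Instr

variable {d : ℕ} {x w : Site d}

lemma actAt_of_ne (ι : Instr d) (hw : w ≠ x) : ι.actAt x w = id ∨ ι.actAt x w = NS.inc := by
  cases ι with
  | sleep => simp [actAt, hw]
  | move z _ =>
    simp only [actAt, if_neg hw]
    split_ifs <;> simp

lemma actAt_self_inc (ι : Instr d) {v : NS} (hv : v ≠ .nat 0) :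
    ι.actAt x x v.inc = (ι.actAt x x v).inc := by
  cases ι <;> simp [actAt, NS.dec_inc hv, NS.mulS_inc hv]

lemma actAt_ne_zero (ι : Instr d) (hw : w ≠ x) {v : NS} (hv : v ≠ .nat 0) :
    ι.actAt x w v ≠ .nat 0 := by
  rcases ι.actAt_of_ne hw with h | h <;> simp [h, hv, NS.inc_ne_zero]

lemma actAt_comm_of_id_or_inc (ι : Instr d) {f : NS → NS} (hf : f = id ∨ f = NS.inc) {v : NS}
    (hv : w = x → v ≠ .nat 0) : ι.actAt x w (f v) = f (ι.actAt x w v) := by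
  rcases hf with rfl | rfl
  · rfl
  by_cases hwx : w = x
  · subst hwx
    exact ι.actAt_self_inc (hv rfl)
  · rcases ι.actAt_of_ne hwx with h | h <;> simp [h]

lemma actAt_comm {y : Site d} (hxy : x ≠ y) (ι₁ ι₂ : Instr d) {v : NS}
    (hx : w = x → v ≠ .nat 0) (hy : w = y → v ≠ .nat 0) :
    ι₁.actAt x w (ι₂.actAt y w v) = ι₂.actAt y w (ι₁.actAt x w v) := by
  by_cases hwy : w = y
  · have hwx : w ≠ x := fun h => hxy (h.symm.trans hwy)
    exact (ι₂.actAt_comm_of_id_or_inc (ι₁.actAt_of_ne hwx) hy).symm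
  · exact ι₁.actAt_comm_of_id_or_inc (ι₂.actAt_of_ne hwy) hx

end Instr

lemma applyInstr_apply {d : ℕ} (x : Site d) (ι : Instr d) (η : Config d) (w : Site d) :
    applyInstr x ι η w = ι.actAt x w (η w) := by
  cases ι with
  | sleep => by_cases hw : w = x <;> simp [applyInstr, Instr.actAt, hw]
  | move z _ =>
    simp only [applyInstr, Instr.actAt]
    split_ifs <;> subst_vars <;> rfl

section Topple

variable {d : ℕ} (I : InstrField d) {x y : Site d}

lemma AcceptableAt.topple_of_ne {s : Config d × Odom d} (hx : AcceptableAt s.1 x) (hxy : x ≠ y) :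
    AcceptableAt (topple I y s).1 x := by
  simpa only [topple, AcceptableAt, applyInstr_apply] using Instr.actAt_ne_zero _ hxy hx

lemma topple_comm (hxy : x ≠ y) {s : Config d × Odom d} (hx : AcceptableAt s.1 x)
    (hy : AcceptableAt s.1 y) :
    topple I x (topple I y s) = topple I y (topple I x s) := by
  obtain ⟨η, h⟩ := s
  have hux : Function.update h y (h y + 1) x = h x := Function.update_of_ne hxy _ _
  have huy : Function.update h x (h x + 1) y = h y := Function.update_of_ne hxy.symm _ _
  simp only [topple, hux, huy]
  refine Prod.ext (funext fun w => ?_) (Function.update_comm hxy.symm _ _ h)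
  simp only [applyInstr_apply]
  exact Instr.actAt_comm hxy _ _ (fun hw => hw ▸ hx) (fun hw => hw ▸ hy)

lemma AcceptableSeq.move_to_front {γ δ : List (Site d)} {s : Config d × Odom d}
    (hacc : AcceptableSeq I (γ ++ x :: δ) s) (hγ : x ∉ γ) (hx : AcceptableAt s.1 x) :
    AcceptableSeq I (γ ++ δ) (topple I x s) ∧
      toppleSeq I (γ ++ x :: δ) s = toppleSeq I (γ ++ δ) (topple I x s) := by
  induction γ generalizing s with
  | nil =>
    cases hacc with
    | cons _ hacc => exact ⟨hacc, rfl⟩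
  | cons y γ ih =>
    rw [List.mem_cons, not_or] at hγ
    cases hacc with
    | cons hy hacc =>
      obtain ⟨hacc', heq⟩ := ih hacc hγ.2 (hx.topple_of_ne I hγ.1)
      have hcomm := topple_comm I hγ.1 hx hy
      refine ⟨.cons (hy.topple_of_ne I (Ne.symm hγ.1)) (hcomm ▸ hacc'), ?_⟩
      simp only [List.cons_append, toppleSeq]
      rw [heq, hcomm]

theorem toppleSeq_eq_of_perm {α β : List (Site d)} {s : Config d × Odom d}
    (hα : AcceptableSeq I α s) (hβ : AcceptableSeq I β s) (hp : α.Perm β) :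
    toppleSeq I α s = toppleSeq I β s := by
  induction hα generalizing β with
  | nil => rw [List.nil_perm.mp hp]
  | @cons x α s hx _ ih =>
    obtain ⟨γ, δ, hγ, rfl, -⟩ := List.exists_erase_eq (hp.subset List.mem_cons_self)
    obtain ⟨hacc, heq⟩ := hβ.move_to_front I hγ hx
    rw [heq, toppleSeq, ih hacc (hp.trans List.perm_middle).cons_inv]

end Topple

/-- **Local abelianness**: if `α` and `β` are acceptable sequences of topplings for `(η,h)`
with `m_α = m_β`, then `Φ_α(η,h) = Φ_β(η,h)`. -/
theorem local_abelianness {d : ℕ} (I : InstrField d) (η : Config d) (h : Odom d)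
    (α β : List (Site d))
    (hα : AcceptableSeq I α (η, h)) (hβ : AcceptableSeq I β (η, h))
    (hm : ∀ x : Site d, α.count x = β.count x) :
    toppleSeq I α (η, h) = toppleSeq I β (η, h) :=
  toppleSeq_eq_of_perm I hα hβ (List.perm_iff_count.mpr hm)

end ARW
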